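/- arXiv:cs/0408023 — 5 statements merged into one kernel-verified Lean document; each statement's English description precedes it below -/
import Mathlib

section
/- Let V be a finite type of values, n a natural number, and l, u : V → ℕ with l d ≤ u d for all d ∈ V. Suppose ∑_{d ∈ V} l d ≤ n ≤ ∑_{d ∈ V} u d. Then for every assignment a : Fin n → V, the minimum of the Hamming distance hammingDist(a, b) over all assignments b : Fin n → V satisfying gcc(l,u) equals max( ∑_{d ∈ V} overflow(a,d), ∑_{d ∈ V} underflow(a,d) ). -/
open Finset

section Aux
variable {V : Type*} [Fintype V] [DecidableEq V] {n : ℕ}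

set_option linter.unusedSectionVars false

private def cnt (a : Fin n → V) (d : V) : ℕ := (univ.filter fun i => a i = d).card

private lemma cnt_sum (a : Fin n → V) : ∑ d, cnt a d = n := by
  have := Finset.card_eq_sum_card_fiberwise (f := a) (s := (univ : Finset (Fin n)))
    (t := univ) (fun x _ => mem_univ _)
  simpa [cnt] using this.symm

private lemma cnt_update (a : Fin n → V) (i : Fin n) (e d : V) :
    cnt (Function.update a i e) d + (if a i = d then 1 else 0)
      = cnt a d + (if e = d then 1 else 0) := by
  have h : ∀ f : Fin n → V, cnt f d = ∑ j, (if f j = d then 1 else 0) := fun f =>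
    Finset.card_filter _ _
  rw [h, h, ← Finset.add_sum_erase _ _ (mem_univ i), ← Finset.add_sum_erase _ _ (mem_univ i)]
  have hsum : ∑ j ∈ univ.erase i, (if Function.update a i e j = d then 1 else 0)
      = ∑ j ∈ univ.erase i, (if a j = d then 1 else 0) := by
    refine Finset.sum_congr rfl fun j hj => ?_
    rw [Function.update_of_ne (Finset.ne_of_mem_erase hj)]
  rw [hsum, Function.update_self]
  ring

private lemma sum_split (f : V → ℕ) {d e : V} (hde : d ≠ e) :
    ∑ v, f v = f d + f e + ∑ v ∈ (univ.erase d).erase e, f v := by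
  rw [← Finset.add_sum_erase _ f (mem_univ d),
    ← Finset.add_sum_erase _ f (Finset.mem_erase.mpr ⟨hde.symm, mem_univ e⟩)]
  ring

private lemma sum_sub_le_dist (a b : Fin n → V) :
    ∑ d, (cnt a d - cnt b d) ≤ hammingDist a b := by
  classical
  set S : Finset (Fin n) := univ.filter fun i => a i ≠ b i with hS
  have hdist : hammingDist a b = S.card := rfl
  have hcard : S.card = ∑ d, (S.filter fun i => a i = d).card :=
    Finset.card_eq_sum_card_fiberwise (fun x _ => mem_univ _)
  rw [hdist, hcard]
  refine Finset.sum_le_sum fun d _ => ?_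
  rw [tsub_le_iff_right]
  calc cnt a d ≤ ((S.filter fun i => a i = d) ∪ (univ.filter fun i => b i = d)).card := by
        apply Finset.card_le_card
        intro i hi
        simp only [cnt, Finset.mem_filter, Finset.mem_union, hS, Finset.mem_univ,
          true_and] at hi ⊢
        by_cases hbi : b i = d
        · exact Or.inr hbi
        · exact Or.inl ⟨by rw [hi]; exact fun h => hbi (h ▸ hi ▸ rfl), hi⟩
    _ ≤ (S.filter fun i => a i = d).card + cnt b d := Finset.card_union_le _ _

private lemma lb (l u : V → ℕ) (a b : Fin n → V)
    (hb : ∀ d, l d ≤ cnt b d ∧ cnt b d ≤ u d) :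
    max (∑ d, (cnt a d - u d)) (∑ d, (l d - cnt a d)) ≤ hammingDist a b := by
  refine max_le ?_ ?_
  · calc ∑ d, (cnt a d - u d) ≤ ∑ d, (cnt a d - cnt b d) :=
        Finset.sum_le_sum fun d _ => tsub_le_tsub_left (hb d).2 _
      _ ≤ hammingDist a b := sum_sub_le_dist a b
  · calc ∑ d, (l d - cnt a d) ≤ ∑ d, (cnt b d - cnt a d) :=
        Finset.sum_le_sum fun d _ => tsub_le_tsub_right (hb d).1 _
      _ ≤ hammingDist b a := sum_sub_le_dist b a
      _ = hammingDist a b := hammingDist_comm b a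

private lemma gcc_of_zero (l u : V → ℕ) (a : Fin n → V)
    (h : max (∑ d, (cnt a d - u d)) (∑ d, (l d - cnt a d)) = 0) :
    ∀ d, l d ≤ cnt a d ∧ cnt a d ≤ u d := by
  intro d
  have h1 : ∑ d, (cnt a d - u d) = 0 := Nat.le_zero.mp (h ▸ le_max_left _ _)
  have h2 : ∑ d, (l d - cnt a d) = 0 := Nat.le_zero.mp (h ▸ le_max_right _ _)
  rw [Finset.sum_eq_zero_iff] at h1 h2
  have := h1 d (mem_univ d); have := h2 d (mem_univ d)
  omega

private lemma step (l u : V → ℕ) (hlu : ∀ d, l d ≤ u d)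
    (hln : ∑ d, l d ≤ n) (hnu : n ≤ ∑ d, u d) (a : Fin n → V)
    (hM : max (∑ d, (cnt a d - u d)) (∑ d, (l d - cnt a d)) ≠ 0) :
    ∃ a' : Fin n → V,
      hammingDist a a' ≤ 1 ∧
      max (∑ d, (cnt a' d - u d)) (∑ d, (l d - cnt a' d)) + 1
        ≤ max (∑ d, (cnt a d - u d)) (∑ d, (l d - cnt a d)) := by
  classical
  set O := ∑ d, (cnt a d - u d) with hO
  set U := ∑ d, (l d - cnt a d) with hU
  have hsum : ∑ d, cnt a d = n := cnt_sum a
  have key : ∃ d e : V, d ≠ e ∧ 1 ≤ cnt a d ∧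
      ((u d < cnt a d ∧ cnt a e < u e ∧ U = 0) ∨
       (u d < cnt a d ∧ cnt a e < l e) ∨
       (l d < cnt a d ∧ cnt a e < l e ∧ O = 0)) := by
    by_cases hO0 : O = 0
    · have hU0 : U ≠ 0 := fun h => hM (by rw [hO0, h]; simp)
      obtain ⟨e, -, he⟩ := Finset.exists_ne_zero_of_sum_ne_zero hU0
      have he' : cnt a e < l e := by omega
      have hdex : ∃ d, l d < cnt a d := by
        by_contra hc
        push_neg at hc
        have : ∑ v, cnt a v < ∑ v, l v :=
          Finset.sum_lt_sum (fun v _ => hc v) ⟨e, mem_univ e, by omega⟩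
        omega
      obtain ⟨d, hd⟩ := hdex
      refine ⟨d, e, ?_, by omega, Or.inr (Or.inr ⟨hd, he', hO0⟩)⟩
      rintro rfl; omega
    · obtain ⟨d, -, hd⟩ := Finset.exists_ne_zero_of_sum_ne_zero hO0
      have hd' : u d < cnt a d := by omega
      by_cases hU0 : U = 0
      · have hex : ∃ e, cnt a e < u e := by
          by_contra hc
          push_neg at hc
          have : ∑ v, u v < ∑ v, cnt a v :=
            Finset.sum_lt_sum (fun v _ => hc v) ⟨d, mem_univ d, by omega⟩
          omega
        obtain ⟨e, he⟩ := hex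
        refine ⟨d, e, ?_, by omega, Or.inl ⟨hd', he, hU0⟩⟩
        rintro rfl; omega
      · obtain ⟨e, -, he⟩ := Finset.exists_ne_zero_of_sum_ne_zero hU0
        have he' : cnt a e < l e := by omega
        have h1 := hlu d; have h2 := hlu e
        refine ⟨d, e, ?_, by omega, Or.inr (Or.inl ⟨hd', he'⟩)⟩
        rintro rfl; omega
  obtain ⟨d, e, hde, hd1, hcase⟩ := key
  have hne : (univ.filter fun i => a i = d).Nonempty := Finset.card_pos.mp hd1
  obtain ⟨i, hi⟩ := hne
  have hai : a i = d := (Finset.mem_filter.mp hi).2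
  set a' := Function.update a i e with ha'
  have hdist : hammingDist a a' ≤ 1 := by
    have hsub : (univ.filter fun j => a j ≠ a' j) ⊆ {i} := by
      intro j hj
      simp only [Finset.mem_filter, Finset.mem_univ, true_and] at hj
      by_contra hji
      exact hj (by rw [ha', Function.update_of_ne (by simpa using hji)])
    calc hammingDist a a' = (univ.filter fun j => a j ≠ a' j).card := rfl
      _ ≤ ({i} : Finset (Fin n)).card := Finset.card_le_card hsub
      _ = 1 := Finset.card_singleton i
  refine ⟨a', hdist, ?_⟩
  have hcd : cnt a' d + 1 = cnt a d := by
    have := cnt_update a i e d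
    simpa [hai, hde.symm] using this
  have hce : cnt a' e = cnt a e + 1 := by
    have := cnt_update a i e e
    have haie : ¬ (a i = e) := by rw [hai]; exact hde
    simpa [haie] using this
  have hcv : ∀ v, v ≠ d → v ≠ e → cnt a' v = cnt a v := by
    intro v hvd hve
    have := cnt_update a i e v
    have h1 : ¬ (a i = v) := by rw [hai]; exact fun h => hvd h.symm
    have h2 : ¬ (e = v) := fun h => hve h.symm
    simpa [h1, h2] using this
  have hrest : ∀ f : V → ℕ,
      ∑ v ∈ (univ.erase d).erase e, (cnt a' v - f v)
        = ∑ v ∈ (univ.erase d).erase e, (cnt a v - f v) := by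
    intro f
    refine Finset.sum_congr rfl fun v hv => ?_
    have hv' := Finset.mem_erase.mp hv
    have hv'' := Finset.mem_erase.mp hv'.2
    rw [hcv v hv''.1 hv'.1]
  have hrest' : ∀ f : V → ℕ,
      ∑ v ∈ (univ.erase d).erase e, (f v - cnt a' v)
        = ∑ v ∈ (univ.erase d).erase e, (f v - cnt a v) := by
    intro f
    refine Finset.sum_congr rfl fun v hv => ?_
    have hv' := Finset.mem_erase.mp hv
    have hv'' := Finset.mem_erase.mp hv'.2
    rw [hcv v hv''.1 hv'.1]
  have eO : O = (cnt a d - u d) + (cnt a e - u e)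
      + ∑ v ∈ (univ.erase d).erase e, (cnt a v - u v) := sum_split _ hde
  have eU : U = (l d - cnt a d) + (l e - cnt a e)
      + ∑ v ∈ (univ.erase d).erase e, (l v - cnt a v) := sum_split _ hde
  have eO' : ∑ v, (cnt a' v - u v) = (cnt a' d - u d) + (cnt a' e - u e)
      + ∑ v ∈ (univ.erase d).erase e, (cnt a v - u v) := by
    rw [sum_split _ hde, hrest]
  have eU' : ∑ v, (l v - cnt a' v) = (l d - cnt a' d) + (l e - cnt a' e)
      + ∑ v ∈ (univ.erase d).erase e, (l v - cnt a v) := by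
    rw [sum_split _ hde, hrest']
  rw [eO', eU']
  have hld := hlu d; have hle := hlu e
  rcases hcase with ⟨h1, h2, h3⟩ | ⟨h1, h2⟩ | ⟨h1, h2, h3⟩ <;> omega

private lemma ub (l u : V → ℕ) (hlu : ∀ d, l d ≤ u d)
    (hln : ∑ d, l d ≤ n) (hnu : n ≤ ∑ d, u d) :
    ∀ (m : ℕ) (a : Fin n → V),
      max (∑ d, (cnt a d - u d)) (∑ d, (l d - cnt a d)) ≤ m →
      ∃ b : Fin n → V, (∀ d, l d ≤ cnt b d ∧ cnt b d ≤ u d) ∧ hammingDist a b ≤ m := by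
  intro m
  induction m with
  | zero =>
    intro a h
    exact ⟨a, gcc_of_zero l u a (Nat.le_zero.mp h), by simp⟩
  | succ m ih =>
    intro a h
    by_cases h0 : max (∑ d, (cnt a d - u d)) (∑ d, (l d - cnt a d)) = 0
    · exact ⟨a, gcc_of_zero l u a h0, by simp⟩
    · obtain ⟨a', hd1, hstep⟩ := step l u hlu hln hnu a h0
      obtain ⟨b, hb, hdb⟩ := ih a' (by omega)
      refine ⟨b, hb, ?_⟩
      calc hammingDist a b ≤ hammingDist a a' + hammingDist a' b :=
            hammingDist_triangle a a' b
        _ ≤ 1 + m := Nat.add_le_add hd1 hdb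
        _ = m + 1 := by omega

end Aux

/-- With `l d ≤ u d` and `∑ l ≤ n ≤ ∑ u`, for every assignment `a`,
the minimum Hamming distance from `a` to an assignment satisfying `gcc(l,u)` equals
`max(∑ overflow, ∑ underflow)`. -/
theorem soft_gcc_variable_based_cost
    (V : Type*) [Fintype V] [DecidableEq V] (n : ℕ) (l u : V → ℕ)
    (hlu : ∀ d, l d ≤ u d)
    (hln : ∑ d, l d ≤ n) (hnu : n ≤ ∑ d, u d)
    (a : Fin n → V) :
    IsLeast
      {m : ℕ | ∃ b : Fin n → V,
        (∀ d, l d ≤ (univ.filter fun i => b i = d).card ∧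
              (univ.filter fun i => b i = d).card ≤ u d) ∧
        hammingDist a b = m}
      (max (∑ d, ((univ.filter fun i => a i = d).card - u d))
           (∑ d, (l d - (univ.filter fun i => a i = d).card))) := by
  constructor
  · obtain ⟨b, hb, hdb⟩ := ub l u hlu hln hnu
      (max (∑ d, (cnt a d - u d)) (∑ d, (l d - cnt a d))) a le_rfl
    have hlb := lb l u a b hb
    exact ⟨b, hb, le_antisymm hdb hlb⟩
  · rintro m ⟨b, hb, rfl⟩
    exact lb l u a b hb
end

section
/- Let V be a finite type of values, n a natural number, and l, u : V → ℕ with l d ≤ u d for all d ∈ V. There exists an assignment a : Fin n → V satisfying gcc(l,u) if and only if ∑_{d ∈ V} l d ≤ n ≤ ∑_{d ∈ V} u d. -/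
open Finset

/-!
The fibre sizes of any assignment add up to `n`, which gives necessity. Conversely, if
`∑ l ≤ n ≤ ∑ u`, fill the slack `n - ∑ l` greedily into the capacities `u - l` to get target
counts `l ≤ c ≤ u` with `∑ c = n`, and read an assignment off an enumeration of
`Σ d, Fin (c d)` by `Fin n`.
-/

theorem Finset.exists_le_sum_eq_of_le_sum {ι : Type*} [DecidableEq ι] (s : Finset ι) (g : ι → ℕ)
    {k : ℕ} (hk : k ≤ ∑ i ∈ s, g i) : ∃ c ≤ g, ∑ i ∈ s, c i = k := by
  induction s using Finset.induction generalizing k with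
  | empty => exact ⟨0, fun _ => Nat.zero_le _, by simp_all⟩
  | insert a s ha ih =>
    rw [sum_insert ha] at hk
    obtain ⟨c, hcg, hc⟩ := ih (k := k - min (g a) k) (by omega)
    refine ⟨Function.update c a (min (g a) k), fun i => ?_, ?_⟩
    · rcases eq_or_ne i a with rfl | hi
      · simp
      · simpa [hi] using hcg i
    · rw [sum_insert ha, sum_update_of_notMem ha, Function.update_self, hc]
      omega

theorem Finset.exists_sum_eq_of_sum_le_of_le_sum {ι : Type*} [DecidableEq ι] (s : Finset ι)
    {l u : ι → ℕ} (hlu : l ≤ u) {n : ℕ} (hl : ∑ i ∈ s, l i ≤ n) (hu : n ≤ ∑ i ∈ s, u i) :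
    ∃ c, l ≤ c ∧ c ≤ u ∧ ∑ i ∈ s, c i = n := by
  obtain ⟨c, hc, hsum⟩ := s.exists_le_sum_eq_of_le_sum (u - l) (k := n - ∑ i ∈ s, l i) <| by
    rw [Pi.sub_def, sum_tsub_distrib s fun i _ => hlu i]; omega
  refine ⟨l + c, le_self_add, fun i => (le_tsub_iff_left (hlu i)).1 (hc i), ?_⟩
  rw [Pi.add_def, sum_add_distrib, hsum]; omega

theorem exists_fin_sum_card_fiber_eq {V : Type*} [Fintype V] [DecidableEq V] (c : V → ℕ) :
    ∃ a : Fin (∑ d, c d) → V, ∀ d, #{i | a i = d} = c d := by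
  let e : (Σ d, Fin (c d)) ≃ Fin (∑ d, c d) := Fintype.equivFinOfCardEq (by simp)
  refine ⟨fun i => (e.symm i).1, fun d => ?_⟩
  rw [← Fintype.card_subtype, ← Fintype.card_fin (c d)]
  exact Fintype.card_congr <| (e.symm.subtypeEquiv fun _ => Iff.rfl).trans (Equiv.sigmaSubtype d)

theorem Fintype.sum_card_fiber_eq_card {α V : Type*} [Fintype α] [Fintype V] [DecidableEq V]
    (a : α → V) :
    ∑ d, #{i | a i = d} = Fintype.card α :=
  (card_eq_sum_card_fiberwise fun i _ => mem_univ (a i)).symm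

/-- There exists an assignment satisfying `gcc(l,u)` iff
`∑ l ≤ n ≤ ∑ u`. -/
theorem gcc_feasibility
    (V : Type*) [Fintype V] [DecidableEq V] (n : ℕ) (l u : V → ℕ)
    (hlu : ∀ d, l d ≤ u d) :
    (∃ a : Fin n → V,
        ∀ d, l d ≤ (univ.filter fun i => a i = d).card ∧
             (univ.filter fun i => a i = d).card ≤ u d)
    ↔ (∑ d, l d ≤ n ∧ n ≤ ∑ d, u d) := by
  constructor
  · rintro ⟨a, ha⟩
    have hn := Fintype.sum_card_fiber_eq_card a
    rw [Fintype.card_fin] at hn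
    exact ⟨hn ▸ sum_le_sum fun d _ => (ha d).1, hn ▸ sum_le_sum fun d _ => (ha d).2⟩
  · rintro ⟨hl, hu⟩
    obtain ⟨c, hlc, hcu, rfl⟩ := univ.exists_sum_eq_of_sum_le_of_le_sum hlu hl hu
    obtain ⟨a, ha⟩ := exists_fin_sum_card_fiber_eq c
    exact ⟨a, fun d => ha d ▸ ⟨hlc d, hcu d⟩⟩
end

section
/- Let V be a finite type of values, n a natural number, and l, u : V → ℕ. For every assignment a : Fin n → V and every assignment b : Fin n → V satisfying gcc(l,u), the Hamming distance satisfies hammingDist(a,b) ≥ max( ∑_{d ∈ V} overflow(a,d), ∑_{d ∈ V} underflow(a,d) ). -/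
open Finset

lemma fiber_sum {V : Type*} [Fintype V] [DecidableEq V] {n : ℕ} (c a b : Fin n → V) :
    ∑ d, ((univ.filter fun i => c i = d ∧ a i ≠ b i).card) = hammingDist a b := by
  rw [hammingDist, Finset.card_eq_sum_card_fiberwise (f := c)
      (t := univ) (fun x _ => mem_univ _)]
  refine Finset.sum_congr rfl fun d _ => ?_
  congr 1
  ext i
  simp only [mem_filter, mem_univ, true_and]
  tauto

/-- For any assignment `a` and any assignment `b` satisfying `gcc(l,u)`,
the Hamming distance is at least `max(∑ overflow, ∑ underflow)`. -/
theorem soft_gcc_cost_lower_bound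
    (V : Type*) [Fintype V] [DecidableEq V] (n : ℕ) (l u : V → ℕ)
    (a b : Fin n → V)
    (hb : ∀ d, l d ≤ (univ.filter fun i => b i = d).card ∧
               (univ.filter fun i => b i = d).card ≤ u d) :
    max (∑ d, ((univ.filter fun i => a i = d).card - u d))
        (∑ d, (l d - (univ.filter fun i => a i = d).card))
      ≤ hammingDist a b := by
  have key1 : ∀ d : V, (univ.filter fun i => a i = d).card - u d ≤
      (univ.filter fun i => a i = d ∧ a i ≠ b i).card := by
    intro d
    have h1 : (univ.filter fun i => a i = d ∧ b i = d).card ≤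
        (univ.filter fun i => b i = d).card :=
      card_le_card (fun i hi => by simp_all [mem_filter])
    have h2 : (univ.filter fun i => a i = d).card =
        (univ.filter fun i => a i = d ∧ b i = d).card +
        (univ.filter fun i => a i = d ∧ a i ≠ b i).card := by
      rw [← card_filter_add_card_filter_not (s := univ.filter fun i => a i = d)
        (p := fun i => b i = d)]
      congr 1 <;> rw [filter_filter] <;> refine congrArg Finset.card ?_ <;> ext i <;>
        simp only [mem_filter, mem_univ, true_and] <;>
        constructor <;> rintro ⟨h, h'⟩ <;> exact ⟨h, by simp_all [eq_comm]⟩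
    have := (hb d).2
    omega
  have key2 : ∀ d : V, l d - (univ.filter fun i => a i = d).card ≤
      (univ.filter fun i => b i = d ∧ a i ≠ b i).card := by
    intro d
    have h1 : (univ.filter fun i => b i = d ∧ a i = b i).card ≤
        (univ.filter fun i => a i = d).card :=
      card_le_card (fun i hi => by
        simp only [mem_filter, mem_univ, true_and] at *
        rw [hi.2]; exact hi.1)
    have h2 : (univ.filter fun i => b i = d).card =
        (univ.filter fun i => b i = d ∧ a i = b i).card +
        (univ.filter fun i => b i = d ∧ a i ≠ b i).card := by
      rw [← card_filter_add_card_filter_not (s := univ.filter fun i => b i = d)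
        (p := fun i => a i = b i)]
      congr 1 <;> rw [filter_filter] <;> congr 1
    have := (hb d).1
    omega
  rw [max_le_iff]
  constructor
  · calc _ ≤ ∑ d, ((univ.filter fun i => a i = d ∧ a i ≠ b i).card) :=
        Finset.sum_le_sum fun d _ => key1 d
      _ = hammingDist a b := fiber_sum a a b
  · calc _ ≤ ∑ d, ((univ.filter fun i => b i = d ∧ a i ≠ b i).card) :=
        Finset.sum_le_sum fun d _ => key2 d
      _ = hammingDist a b := fiber_sum b a b
end

section
/- Let V be a finite type of values, n a natural number, l, u : V → ℕ, and domains D : Fin n → Finset V. Then, as an equality in ℕ∞ (with the infimum of the empty set equal to ∞), the infimum over all pairs (a, b), where a : Fin n → V satisfies a i ∈ D i for all i and b : Fin n → V satisfies gcc(l,u), of the Hamming distance hammingDist(a,b), equals the infimum over all b : Fin n → V satisfying gcc(l,u) of |{i : b i ∉ D i}|. -/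
open Finset

/-- The minimum (in `ℕ∞`) of the Hamming distance over pairs `(a,b)` with
`a` in the domains and `b` satisfying `gcc(l,u)` equals the minimum over `b` satisfying
`gcc(l,u)` of the number of positions where `b` leaves its domain. -/
theorem soft_gcc_domain_violation_equiv
    (V : Type*) [Fintype V] [DecidableEq V] (n : ℕ) (l u : V → ℕ)
    (D : Fin n → Finset V) (hD : ∀ i, (D i).Nonempty) :
    sInf {k : ℕ∞ | ∃ a b : Fin n → V,
        (∀ i, a i ∈ D i) ∧
        (∀ d, l d ≤ (univ.filter fun i => b i = d).card ∧
              (univ.filter fun i => b i = d).card ≤ u d) ∧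
        (hammingDist a b : ℕ∞) = k}
    = sInf {k : ℕ∞ | ∃ b : Fin n → V,
        (∀ d, l d ≤ (univ.filter fun i => b i = d).card ∧
              (univ.filter fun i => b i = d).card ≤ u d) ∧
        (((univ.filter fun i => b i ∉ D i).card : ℕ∞)) = k} := by
  apply le_antisymm
  · refine le_sInf ?_
    rintro k ⟨b, hgcc, rfl⟩
    set a : Fin n → V := fun i => if b i ∈ D i then b i else (hD i).choose with ha
    have hham : hammingDist a b ≤ (univ.filter fun i => b i ∉ D i).card := by
      rw [hammingDist]
      apply Finset.card_le_card
      intro i hi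
      simp only [mem_filter, mem_univ, true_and] at hi ⊢
      intro hbi
      apply hi
      simp [ha, hbi]
    calc sInf {k : ℕ∞ | ∃ a b : Fin n → V,
        (∀ i, a i ∈ D i) ∧
        (∀ d, l d ≤ (univ.filter fun i => b i = d).card ∧
              (univ.filter fun i => b i = d).card ≤ u d) ∧
        (hammingDist a b : ℕ∞) = k} ≤ (hammingDist a b : ℕ∞) := by
          apply sInf_le
          refine ⟨a, b, ?_, hgcc, rfl⟩
          intro i
          by_cases h : b i ∈ D i <;> simp [ha, h, (hD i).choose_spec]
      _ ≤ _ := by exact_mod_cast hham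
  · refine le_sInf ?_
    rintro k ⟨a, b, hdom, hgcc, rfl⟩
    have hle : (univ.filter fun i => b i ∉ D i).card ≤ hammingDist a b := by
      rw [hammingDist]
      apply Finset.card_le_card
      intro i hi
      simp only [mem_filter, mem_univ, true_and] at hi ⊢
      intro h
      exact hi (h ▸ hdom i)
    calc sInf {k : ℕ∞ | ∃ b : Fin n → V,
        (∀ d, l d ≤ (univ.filter fun i => b i = d).card ∧
              (univ.filter fun i => b i = d).card ≤ u d) ∧
        (((univ.filter fun i => b i ∉ D i).card : ℕ∞)) = k}
        ≤ ((univ.filter fun i => b i ∉ D i).card : ℕ∞) := sInf_le ⟨b, hgcc, rfl⟩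
      _ ≤ _ := by exact_mod_cast hle
end

section
/- Let V be a finite type of values, n a natural number, l, u : V → ℕ, domains D : Fin n → Finset V, a fixed index i₀ : Fin n, and a fixed value v ∈ D i₀. Then, as an equality in ℕ∞ (with the infimum of the empty set equal to ∞), the infimum over all pairs (a, b), where a : Fin n → V satisfies a i ∈ D i for all i and a i₀ = v, and b : Fin n → V satisfies gcc(l,u), of hammingDist(a,b), equals the infimum over all b : Fin n → V satisfying gcc(l,u) of (if b i₀ = v then 0 else 1) + |{j : j ≠ i₀ and b j ∉ D j}|. -/
open Finset

/-- Fixing `a i₀ = v` with `v ∈ D i₀`, the minimum (in `ℕ∞`) Hamming distance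
over pairs `(a,b)` with `a` in the domains and `b` satisfying `gcc(l,u)` equals the minimum
over `b` satisfying `gcc(l,u)` of `(if b i₀ = v then 0 else 1) + |{j ≠ i₀ : b j ∉ D j}|`. -/
theorem soft_gcc_domain_violation_with_assignment
    (V : Type*) [Fintype V] [DecidableEq V] (n : ℕ) (l u : V → ℕ)
    (D : Fin n → Finset V) (hD : ∀ i, (D i).Nonempty)
    (i₀ : Fin n) (v : V) (hv : v ∈ D i₀) :
    sInf {k : ℕ∞ | ∃ a b : Fin n → V,
        (∀ i, a i ∈ D i) ∧ a i₀ = v ∧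
        (∀ d, l d ≤ (univ.filter fun i => b i = d).card ∧
              (univ.filter fun i => b i = d).card ≤ u d) ∧
        (hammingDist a b : ℕ∞) = k}
    = sInf {k : ℕ∞ | ∃ b : Fin n → V,
        (∀ d, l d ≤ (univ.filter fun i => b i = d).card ∧
              (univ.filter fun i => b i = d).card ≤ u d) ∧
        ((if b i₀ = v then 0 else 1)
          + ((univ.filter fun j => j ≠ i₀ ∧ b j ∉ D j).card : ℕ∞)) = k} := by
  classical
  have cast_cost : ∀ b : Fin n → V,
      ((if b i₀ = v then (0:ℕ∞) else 1)
        + ((univ.filter fun j => j ≠ i₀ ∧ b j ∉ D j).card : ℕ∞))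
      = (((if b i₀ = v then 0 else 1)
        + (univ.filter fun j => j ≠ i₀ ∧ b j ∉ D j).card : ℕ) : ℕ∞) := by
    intro b; push_cast; split <;> simp
  apply le_antisymm
  · -- LHS inf ≤ RHS inf
    apply le_sInf
    rintro k ⟨b, hb, rfl⟩
    set a : Fin n → V := fun j =>
      if j = i₀ then v else if b j ∈ D j then b j else (hD j).choose with ha
    have haD : ∀ i, a i ∈ D i := by
      intro i
      simp only [ha]
      split
      · next h => subst h; exact hv
      · split
        · assumption
        · exact (hD i).choose_spec
    have hai : a i₀ = v := by simp [ha]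
    have hnat : hammingDist a b
        ≤ (if b i₀ = v then 0 else 1)
          + (univ.filter fun j => j ≠ i₀ ∧ b j ∉ D j).card := by
      unfold hammingDist
      by_cases hbv : b i₀ = v
      · simp only [hbv, if_pos, if_true]
        rw [zero_add]
        apply card_le_card
        intro j hj
        simp only [mem_filter, mem_univ, true_and] at hj ⊢
        by_cases hji : j = i₀
        · exact absurd (by rw [hji, hai, hbv]) hj
        · refine ⟨hji, ?_⟩
          intro hmem
          apply hj
          simp [ha, hji, hmem]
      · simp only [hbv, if_neg, if_false]
        calc (univ.filter fun i => a i ≠ b i).card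
            ≤ (insert i₀ (univ.filter fun j => j ≠ i₀ ∧ b j ∉ D j)).card := by
              apply card_le_card
              intro j hj
              simp only [mem_filter, mem_univ, true_and] at hj
              by_cases hji : j = i₀
              · exact mem_insert.2 (Or.inl hji)
              · refine mem_insert.2 (Or.inr ?_)
                simp only [mem_filter, mem_univ, true_and]
                refine ⟨hji, fun hmem => hj ?_⟩
                simp [ha, hji, hmem]
          _ ≤ (univ.filter fun j => j ≠ i₀ ∧ b j ∉ D j).card + 1 := card_insert_le _ _
          _ = 1 + _ := Nat.add_comm _ _
    refine le_trans (sInf_le ⟨a, b, haD, hai, hb, rfl⟩) ?_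
    rw [cast_cost]
    exact_mod_cast hnat
  · -- RHS inf ≤ LHS inf
    apply le_sInf
    rintro k ⟨a, b, haD, hai, hb, rfl⟩
    have hnat : (if b i₀ = v then 0 else 1)
          + (univ.filter fun j => j ≠ i₀ ∧ b j ∉ D j).card
        ≤ hammingDist a b := by
      unfold hammingDist
      by_cases hbv : b i₀ = v
      · simp only [hbv, if_pos, if_true]
        rw [zero_add]
        apply card_le_card
        intro j hj
        simp only [mem_filter, mem_univ, true_and] at hj ⊢
        intro heq
        exact hj.2 (heq ▸ haD j)
      · simp only [hbv, if_neg, if_false]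
        rw [Nat.add_comm]
        have hnotin : i₀ ∉ (univ.filter fun j => j ≠ i₀ ∧ b j ∉ D j) := by
          simp
        rw [← card_insert_of_notMem hnotin]
        apply card_le_card
        intro j hj
        rcases mem_insert.1 hj with hji | hj'
        · subst hji
          simp only [mem_filter, mem_univ, true_and]
          rw [hai]
          exact fun h => hbv h.symm
        · simp only [mem_filter, mem_univ, true_and] at hj' ⊢
          intro heq
          exact hj'.2 (heq ▸ haD j)
    refine le_trans (sInf_le ⟨b, hb, rfl⟩) ?_
    rw [cast_cost]
    exact_mod_cast hnat
end
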